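/- For the RK-RR bias sequence defined by m_0 = x_0 - x_μ and m_{t+1} = μ(I - a_{i_t} a_{i_t}^T/||a_{i_t}||^2) m_t with i_t sampled with probability ||a_{i_t}||^2/||A||_F^2, if x_0 - x_μ ∈ range(A^T) then E||m_t||^2 ≤ [μ^2 (1 - κ_dem^{-2})]^t ||x_0 - x_μ||^2. -/

import Mathlib

open Matrix Finset
noncomputable section

/-- Squared Euclidean norm of a vector. -/
def vnormSq {k : ℕ} (x : Fin k → ℝ) : ℝ := ∑ i, x i ^ 2

/-- Squared Frobenius norm of a matrix. -/
def frobSq {n d : ℕ} (A : Matrix (Fin n) (Fin d) ℝ) : ℝ := ∑ i, vnormSq (A i)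

/-- Row sampling probability ‖a_i‖²/‖A‖_F² used by randomized Kaczmarz. -/
def rowProb {n d : ℕ} (A : Matrix (Fin n) (Fin d) ℝ) (i : Fin n) : ℝ := vnormSq (A i) / frobSq A

/-- Spectral norm (ℓ²-operator norm) of a matrix. -/
def matSpectralNorm {n d : ℕ} (M : Matrix (Fin n) (Fin d) ℝ) : ℝ :=
  ‖LinearMap.toContinuousLinearMap (Matrix.toEuclideanLin M)‖

/-- The four Penrose conditions characterizing the Moore–Penrose pseudoinverse. -/
def IsMoorePenrose {n d : ℕ} (A : Matrix (Fin n) (Fin d) ℝ) (Ap : Matrix (Fin d) (Fin n) ℝ) : Prop :=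
  A * Ap * A = A ∧ Ap * A * Ap = Ap ∧ (A * Ap)ᵀ = A * Ap ∧ (Ap * A)ᵀ = Ap * A

/-- Demmel condition number κ_dem = ‖A⁺‖ ‖A‖_F. -/
def kdem {n d : ℕ} (A : Matrix (Fin n) (Fin d) ℝ) (Ap : Matrix (Fin d) (Fin n) ℝ) : ℝ :=
  matSpectralNorm Ap * Real.sqrt (frobSq A)

/-- One randomized Kaczmarz update using row i. -/
def rkStep {n d : ℕ} (A : Matrix (Fin n) (Fin d) ℝ) (b : Fin n → ℝ) (i : Fin n) (x : Fin d → ℝ) :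
    Fin d → ℝ := x + ((b i - A i ⬝ᵥ x) / vnormSq (A i)) • A i

/-- Randomized Kaczmarz iterates along a fixed path ω of row indices. -/
def rkSeq {n d : ℕ} (A : Matrix (Fin n) (Fin d) ℝ) (b : Fin n → ℝ) (x0 : Fin d → ℝ)
    (ω : ℕ → Fin n) : ℕ → Fin d → ℝ
  | 0 => x0
  | t + 1 => rkStep A b (ω t) (rkSeq A b x0 ω t)

/-- Extend a finite path of indices to an infinite one. -/
def extendPath {n T : ℕ} [NeZero n] (ω : Fin T → Fin n) : ℕ → Fin n :=
  fun s => if h : s < T then ω ⟨s, h⟩ else 0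

/-- Probability of a finite path of i.i.d. row indices. -/
def pathWeight {n d T : ℕ} (A : Matrix (Fin n) (Fin d) ℝ) (ω : Fin T → Fin n) : ℝ :=
  ∏ t, rowProb A (ω t)

/-- The expected one-step Kaczmarz contraction matrix I - AᵀA/‖A‖_F². -/
def kacMat {n d : ℕ} (A : Matrix (Fin n) (Fin d) ℝ) : Matrix (Fin d) (Fin d) ℝ :=
  1 - (frobSq A)⁻¹ • (Aᵀ * A)

/-- x lies in the row space range(Aᵀ). -/
def inRowSpace {n d : ℕ} (A : Matrix (Fin n) (Fin d) ℝ) (x : Fin d → ℝ) : Prop :=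
  ∃ u : Fin n → ℝ, x = Aᵀ *ᵥ u

/-- RK-RR iterates: Kaczmarz step followed by weight decay by μ. -/
def rrSeq {n d : ℕ} (A : Matrix (Fin n) (Fin d) ℝ) (b : Fin n → ℝ) (μ : ℝ) (x0 : Fin d → ℝ)
    (ω : ℕ → Fin n) : ℕ → Fin d → ℝ
  | 0 => x0
  | t + 1 => μ • rkStep A b (ω t) (rrSeq A b μ x0 ω t)

/-- Orthogonal projection step (I - a aᵀ/‖a‖²) x for row a = A i. -/
def projStep {n d : ℕ} (A : Matrix (Fin n) (Fin d) ℝ) (i : Fin n) (x : Fin d → ℝ) : Fin d → ℝ :=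
  x - ((A i ⬝ᵥ x) / vnormSq (A i)) • A i

/-- RK-RR bias sequence m_{t+1} = μ (I - a aᵀ/‖a‖²) m_t. -/
def biasSeq {n d : ℕ} (A : Matrix (Fin n) (Fin d) ℝ) (μ : ℝ) (m0 : Fin d → ℝ)
    (ω : ℕ → Fin n) : ℕ → Fin d → ℝ
  | 0 => m0
  | t + 1 => μ • projStep A (ω t) (biasSeq A μ m0 ω t)

/-- RK-RR variance sequence v_{t+1} = μ(I - aaᵀ/‖a‖²)v_t + μ (b_i - aᵀx_μ)a/‖a‖² - (1-μ)x_μ. -/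
def varSeq {n d : ℕ} (A : Matrix (Fin n) (Fin d) ℝ) (b : Fin n → ℝ) (μ : ℝ) (xmu : Fin d → ℝ)
    (ω : ℕ → Fin n) : ℕ → Fin d → ℝ
  | 0 => 0
  | t + 1 => μ • projStep A (ω t) (varSeq A b μ xmu ω t)
      + (μ * ((b (ω t) - A (ω t) ⬝ᵥ xmu) / vnormSq (A (ω t)))) • A (ω t)
      - (1 - μ) • xmu

/-- Covariance matrix Σ = I_m + v 1_m 1_mᵀ. -/
def covM (m : ℕ) (v : ℝ) : Matrix (Fin m) (Fin m) ℝ := 1 + v • Matrix.of fun _ _ => 1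

/-- Block Σ_{S,T} of the covariance matrix Σ = I + v 1 1ᵀ. -/
def subBlock {m : ℕ} (v : ℝ) (S T : Finset (Fin m)) : Matrix ↥S ↥T ℝ :=
  (covM m v).submatrix (fun i => i.1) (fun j => j.1)

/-- A deterministic adaptive algorithm that accesses at most t entries of b
(given full access to A) and outputs an estimate of the least-squares solution. -/
structure RowAccessAlg (d t : ℕ) where
  query : (n : ℕ) → Matrix (Fin n) (Fin d) ℝ → (j : Fin t) → (Fin (j : ℕ) → ℝ) → Fin n
  output : (n : ℕ) → Matrix (Fin n) (Fin d) ℝ → (Fin t → ℝ) → Fin d → ℝ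

/-- The successive answers to the algorithm's adaptive queries. -/
def RowAccessAlg.answers {d t : ℕ} (alg : RowAccessAlg d t) (n : ℕ)
    (A : Matrix (Fin n) (Fin d) ℝ) (b : Fin n → ℝ) : (j : ℕ) → j < t → ℝ
  | j, h => b (alg.query n A ⟨j, h⟩ fun i => alg.answers n A b i (i.isLt.trans h))
  termination_by j _ => j

/-- The algorithm's output estimate on the problem (A, b). -/
def RowAccessAlg.run {d t : ℕ} (alg : RowAccessAlg d t) (n : ℕ)
    (A : Matrix (Fin n) (Fin d) ℝ) (b : Fin n → ℝ) : Fin d → ℝ :=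
  alg.output n A fun j => alg.answers n A b j j.isLt

/-! The expected squared norm obeys a one-step recursion: averaging over the sampled row,
`∑ᵢ pᵢ ‖(I - aᵢaᵢᵀ/‖aᵢ‖²) x‖² = ‖x‖² - ‖A x‖²/‖A‖_F²`. On the row space, where `A⁺ A` is the
identity, `‖x‖ ≤ ‖A⁺‖ ‖A x‖`, so this is at most `(1 - κ_dem⁻²) ‖x‖²`; the row space is invariant
under every projection step, and the weight decay contributes the factor `μ²`. -/

lemma vnormSq_eq_dotProduct {k : ℕ} (x : Fin k → ℝ) : vnormSq x = x ⬝ᵥ x := by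
  simp only [vnormSq, dotProduct, sq]

lemma vnormSq_nonneg {k : ℕ} (x : Fin k → ℝ) : 0 ≤ vnormSq x :=
  Finset.sum_nonneg fun i _ => sq_nonneg (x i)

lemma vnormSq_pos {k : ℕ} {x : Fin k → ℝ} (hx : x ≠ 0) : 0 < vnormSq x :=
  (vnormSq_nonneg x).lt_of_ne' (by rwa [vnormSq_eq_dotProduct, Ne, dotProduct_self_eq_zero])

lemma vnormSq_smul {k : ℕ} (c : ℝ) (x : Fin k → ℝ) : vnormSq (c • x) = c ^ 2 * vnormSq x := by
  simp only [vnormSq, Pi.smul_apply, smul_eq_mul, mul_pow, Finset.mul_sum]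

lemma vnormSq_mulVec_le {a b : ℕ} (M : Matrix (Fin a) (Fin b) ℝ) (v : Fin b → ℝ) :
    vnormSq (M *ᵥ v) ≤ matSpectralNorm M ^ 2 * vnormSq v := by
  have hnorm : ∀ {k : ℕ} (x : Fin k → ℝ), vnormSq x = ‖WithLp.toLp 2 x‖ ^ 2 := fun x => by
    rw [EuclideanSpace.norm_eq, Real.sq_sqrt (by positivity)]
    simp only [vnormSq, Real.norm_eq_abs, sq_abs]
  rw [hnorm, hnorm, ← mul_pow]
  exact pow_le_pow_left₀ (norm_nonneg _)
    ((LinearMap.toContinuousLinearMap (Matrix.toEuclideanLin M)).le_opNorm (WithLp.toLp 2 v)) 2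

lemma frobSq_pos {n d : ℕ} [NeZero n] {A : Matrix (Fin n) (Fin d) ℝ} (hrows : ∀ i, A i ≠ 0) :
    0 < frobSq A :=
  Finset.sum_pos' (fun i _ => vnormSq_nonneg (A i)) ⟨0, Finset.mem_univ _, vnormSq_pos (hrows 0)⟩

lemma rowProb_nonneg {n d : ℕ} (A : Matrix (Fin n) (Fin d) ℝ) (i : Fin n) : 0 ≤ rowProb A i :=
  div_nonneg (vnormSq_nonneg _) (Finset.sum_nonneg fun _ _ => vnormSq_nonneg _)

lemma pathWeight_nonneg {n d T : ℕ} (A : Matrix (Fin n) (Fin d) ℝ) (ω : Fin T → Fin n) :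
    0 ≤ pathWeight A ω :=
  Finset.prod_nonneg fun t _ => rowProb_nonneg A (ω t)

lemma pathWeight_snoc {n d T : ℕ} (A : Matrix (Fin n) (Fin d) ℝ) (ω : Fin T → Fin n) (i : Fin n) :
    pathWeight A (Fin.snoc ω i : Fin (T + 1) → Fin n) = pathWeight A ω * rowProb A i := by
  simp only [pathWeight, Fin.prod_univ_castSucc, Fin.snoc_castSucc, Fin.snoc_last]

lemma sum_pathWeight_mul_succ {n d T : ℕ} (A : Matrix (Fin n) (Fin d) ℝ)
    (g : (Fin (T + 1) → Fin n) → ℝ) :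
    ∑ ω, pathWeight A ω * g ω
      = ∑ ω : Fin T → Fin n, pathWeight A ω * ∑ i, rowProb A i * g (Fin.snoc ω i) := by
  rw [← (Fin.snocEquiv fun _ => Fin n).sum_comp, Fintype.sum_prod_type_right]
  refine Finset.sum_congr rfl fun ω _ => ?_
  rw [Finset.mul_sum]
  refine Finset.sum_congr rfl fun i _ => ?_
  change pathWeight A (Fin.snoc ω i) * g (Fin.snoc ω i) = _
  rw [pathWeight_snoc, mul_assoc]

lemma inRowSpace_iff {n d : ℕ} (A : Matrix (Fin n) (Fin d) ℝ) (x : Fin d → ℝ) :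
    inRowSpace A x ↔ x ∈ LinearMap.range Aᵀ.mulVecLin := by
  simp only [inRowSpace, LinearMap.mem_range, Matrix.mulVecLin_apply, eq_comm]

lemma inRowSpace_row {n d : ℕ} (A : Matrix (Fin n) (Fin d) ℝ) (i : Fin n) : inRowSpace A (A i) :=
  ⟨Pi.single i 1, by ext; simp⟩

lemma inRowSpace_projStep {n d : ℕ} {A : Matrix (Fin n) (Fin d) ℝ} {x : Fin d → ℝ}
    (i : Fin n) (hx : inRowSpace A x) : inRowSpace A (projStep A i x) := by
  rw [inRowSpace_iff] at hx ⊢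
  exact Submodule.sub_mem _ hx
    (Submodule.smul_mem _ _ ((inRowSpace_iff A _).mp (inRowSpace_row A i)))

lemma IsMoorePenrose.mulVec_mulVec_of_inRowSpace {n d : ℕ} {A : Matrix (Fin n) (Fin d) ℝ}
    {Ap : Matrix (Fin d) (Fin n) ℝ} (hAp : IsMoorePenrose A Ap) {x : Fin d → ℝ}
    (hx : inRowSpace A x) : Ap *ᵥ (A *ᵥ x) = x := by
  obtain ⟨u, rfl⟩ := hx
  have hAtr : Ap * A * Aᵀ = Aᵀ := by
    rw [← hAp.2.2.2, ← transpose_mul, ← Matrix.mul_assoc, hAp.1]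
  rw [mulVec_mulVec, mulVec_mulVec, hAtr]

lemma IsMoorePenrose.vnormSq_le_of_inRowSpace {n d : ℕ} {A : Matrix (Fin n) (Fin d) ℝ}
    {Ap : Matrix (Fin d) (Fin n) ℝ} (hAp : IsMoorePenrose A Ap) {x : Fin d → ℝ}
    (hx : inRowSpace A x) : vnormSq x ≤ matSpectralNorm Ap ^ 2 * vnormSq (A *ᵥ x) := by
  simpa only [hAp.mulVec_mulVec_of_inRowSpace hx] using vnormSq_mulVec_le Ap (A *ᵥ x)

lemma vnormSq_projStep {n d : ℕ} {A : Matrix (Fin n) (Fin d) ℝ} {i : Fin n} (hi : A i ≠ 0)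
    (x : Fin d → ℝ) :
    vnormSq (projStep A i x) = vnormSq x - (A i ⬝ᵥ x) ^ 2 / vnormSq (A i) := by
  have hai := (vnormSq_pos hi).ne'
  simp only [projStep, vnormSq_eq_dotProduct, sub_dotProduct, dotProduct_sub, smul_dotProduct,
    dotProduct_smul, smul_eq_mul, dotProduct_comm x (A i)] at hai ⊢
  field_simp
  ring

lemma sum_rowProb_mul_vnormSq_projStep {n d : ℕ} [NeZero n] {A : Matrix (Fin n) (Fin d) ℝ}
    (hrows : ∀ i, A i ≠ 0) (x : Fin d → ℝ) :
    ∑ i, rowProb A i * vnormSq (projStep A i x) = vnormSq x - vnormSq (A *ᵥ x) / frobSq A := by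
  have hF := (frobSq_pos hrows).ne'
  have hterm : ∀ i, rowProb A i * vnormSq (projStep A i x)
      = (vnormSq (A i) * vnormSq x - (A i ⬝ᵥ x) ^ 2) / frobSq A := fun i => by
    have hai := (vnormSq_pos (hrows i)).ne'
    rw [vnormSq_projStep (hrows i), rowProb]
    field_simp
  simp only [hterm, ← Finset.sum_div, Finset.sum_sub_distrib, ← Finset.sum_mul]
  rw [← frobSq, mul_comm, sub_div, mul_div_assoc, div_self hF, mul_one]
  rfl

section Contraction

variable {n d : ℕ} [NeZero n] {A : Matrix (Fin n) (Fin d) ℝ} {Ap : Matrix (Fin d) (Fin n) ℝ}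

lemma sum_rowProb_mul_vnormSq_projStep_le (hrows : ∀ i, A i ≠ 0) (hAp : IsMoorePenrose A Ap)
    {x : Fin d → ℝ} (hx : inRowSpace A x) :
    ∑ i, rowProb A i * vnormSq (projStep A i x) ≤ (1 - (kdem A Ap ^ 2)⁻¹) * vnormSq x := by
  have hF := frobSq_pos hrows
  have hkdem : kdem A Ap ^ 2 = matSpectralNorm Ap ^ 2 * frobSq A := by
    rw [kdem, mul_pow, Real.sq_sqrt hF.le]
  have hAx : (kdem A Ap ^ 2)⁻¹ * vnormSq x ≤ vnormSq (A *ᵥ x) / frobSq A := by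
    rcases (sq_nonneg (matSpectralNorm Ap)).eq_or_lt with h | h
    · rw [hkdem, ← h, zero_mul, _root_.inv_zero, zero_mul]
      exact div_nonneg (vnormSq_nonneg _) hF.le
    · rw [hkdem, inv_mul_le_iff₀ (by positivity)]
      calc vnormSq x ≤ matSpectralNorm Ap ^ 2 * vnormSq (A *ᵥ x) := hAp.vnormSq_le_of_inRowSpace hx
        _ = _ := by field_simp
  rw [sum_rowProb_mul_vnormSq_projStep hrows, sub_mul, one_mul]
  linarith

lemma one_sub_inv_kdem_sq_nonneg (hrows : ∀ i, A i ≠ 0) (hAp : IsMoorePenrose A Ap) :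
    0 ≤ 1 - (kdem A Ap ^ 2)⁻¹ := by
  have hle := sum_rowProb_mul_vnormSq_projStep_le hrows hAp (inRowSpace_row A 0)
  have hsum : 0 ≤ ∑ i, rowProb A i * vnormSq (projStep A i (A 0)) :=
    Finset.sum_nonneg fun i _ => mul_nonneg (rowProb_nonneg A i) (vnormSq_nonneg _)
  exact nonneg_of_mul_nonneg_left (hsum.trans hle) (vnormSq_pos (hrows 0))

end Contraction

section BiasSequence

variable {n d : ℕ} (A : Matrix (Fin n) (Fin d) ℝ) (μ : ℝ) (m0 : Fin d → ℝ)

lemma biasSeq_congr {ω ω' : ℕ → Fin n} {t : ℕ} (h : ∀ s < t, ω s = ω' s) :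
    biasSeq A μ m0 ω t = biasSeq A μ m0 ω' t := by
  induction t with
  | zero => rfl
  | succ t ih =>
    rw [biasSeq, biasSeq, ih fun s hs => h s (hs.trans t.lt_succ_self), h t t.lt_succ_self]

lemma biasSeq_extendPath_snoc [NeZero n] {t : ℕ} (ω : Fin t → Fin n) (i : Fin n) :
    biasSeq A μ m0 (extendPath (Fin.snoc ω i : Fin (t + 1) → Fin n)) (t + 1)
      = μ • projStep A i (biasSeq A μ m0 (extendPath ω) t) := by
  have hlast : extendPath (Fin.snoc ω i : Fin (t + 1) → Fin n) t = i := by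
    simp [extendPath, Fin.snoc]
  have hinit : biasSeq A μ m0 (extendPath (Fin.snoc ω i : Fin (t + 1) → Fin n)) t
      = biasSeq A μ m0 (extendPath ω) t :=
    biasSeq_congr A μ m0 fun s hs => by simp [extendPath, hs, Nat.lt_succ_of_lt hs, Fin.snoc]
  rw [biasSeq, hlast, hinit]

variable {A m0}

lemma biasSeq_inRowSpace (h0 : inRowSpace A m0) (ω : ℕ → Fin n) (t : ℕ) :
    inRowSpace A (biasSeq A μ m0 ω t) := by
  induction t with
  | zero => exact h0
  | succ t ih =>
    obtain ⟨u, hu⟩ := inRowSpace_projStep (ω t) ih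
    exact ⟨μ • u, by rw [biasSeq, hu, mulVec_smul]⟩

lemma expected_vnormSq_biasSeq_succ_le [NeZero n] (hrows : ∀ i, A i ≠ 0)
    {Ap : Matrix (Fin d) (Fin n) ℝ} (hAp : IsMoorePenrose A Ap) (h0 : inRowSpace A m0) (t : ℕ) :
    ∑ ω : Fin (t + 1) → Fin n, pathWeight A ω * vnormSq (biasSeq A μ m0 (extendPath ω) (t + 1))
      ≤ μ ^ 2 * (1 - (kdem A Ap ^ 2)⁻¹)
        * ∑ ω : Fin t → Fin n, pathWeight A ω * vnormSq (biasSeq A μ m0 (extendPath ω) t) := by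
  rw [sum_pathWeight_mul_succ, Finset.mul_sum]
  refine Finset.sum_le_sum fun ω _ => ?_
  set m := biasSeq A μ m0 (extendPath ω) t
  have hstep :=
    sum_rowProb_mul_vnormSq_projStep_le hrows hAp (biasSeq_inRowSpace μ h0 (extendPath ω) t)
  simp only [biasSeq_extendPath_snoc, vnormSq_smul, mul_left_comm _ (μ ^ 2), ← Finset.mul_sum]
  calc μ ^ 2 * (pathWeight A ω * ∑ i, rowProb A i * vnormSq (projStep A i m))
      ≤ μ ^ 2 * (pathWeight A ω * ((1 - (kdem A Ap ^ 2)⁻¹) * vnormSq m)) := by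
        gcongr
        exact pathWeight_nonneg A ω
    _ = _ := by ring

end BiasSequence

theorem rkrr_bias_bound_general {n d : ℕ} [NeZero n]
    (A : Matrix (Fin n) (Fin d) ℝ) (hrows : ∀ i, A i ≠ 0)
    (Ap : Matrix (Fin d) (Fin n) ℝ) (hAp : IsMoorePenrose A Ap)
    (μ : ℝ)
    (m0 : Fin d → ℝ) (h0 : inRowSpace A m0) (t : ℕ) :
    ∑ ω : Fin t → Fin n, pathWeight A ω * vnormSq (biasSeq A μ m0 (extendPath ω) t)
      ≤ (μ ^ 2 * (1 - (kdem A Ap ^ 2)⁻¹)) ^ t * vnormSq m0 := by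
  have hρ : 0 ≤ μ ^ 2 * (1 - (kdem A Ap ^ 2)⁻¹) :=
    mul_nonneg (sq_nonneg μ) (one_sub_inv_kdem_sq_nonneg hrows hAp)
  induction t with
  | zero => simp [pathWeight, biasSeq]
  | succ t ih =>
    calc _ ≤ _ := expected_vnormSq_biasSeq_succ_le μ hrows hAp h0 t
      _ ≤ _ := mul_le_mul_of_nonneg_left ih hρ
      _ = _ := by ring

/-- the RK-RR bias sequence m_{t+1} = μ(I - a aᵀ/‖a‖²)m_t with
m_0 = x_0 - x_μ ∈ range(Aᵀ) satisfies E‖m_t‖² ≤ [μ²(1 - κ_dem⁻²)]^t ‖m_0‖². -/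
theorem rkrr_bias_bound {n d : ℕ} [NeZero n]
    (A : Matrix (Fin n) (Fin d) ℝ) (hrows : ∀ i, A i ≠ 0)
    (Ap : Matrix (Fin d) (Fin n) ℝ) (hAp : IsMoorePenrose A Ap)
    (μ : ℝ) (hμ0 : 0 < μ) (hμ1 : μ < 1)
    (m0 : Fin d → ℝ) (h0 : inRowSpace A m0) (t : ℕ) :
    ∑ ω : Fin t → Fin n, pathWeight A ω * vnormSq (biasSeq A μ m0 (extendPath ω) t)
      ≤ (μ ^ 2 * (1 - (kdem A Ap ^ 2)⁻¹)) ^ t * vnormSq m0 :=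
  rkrr_bias_bound_general A hrows Ap hAp μ m0 h0 t
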